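/- If g is a good counter on a graph G and there exist vertices u, v with g({u}) = 1 and g({v}) = −1, then g(∅,∅) = 0 and G is connected. -/

import Mathlib

/-!
Splitting the stable sets by whether they contain `w` gives
`f(X, Y) = f(X, Y ∪ {w}) + f(X ∪ {w}, Y)`. For `X = Y = ∅` and `w = u, v`, the bounds
`|g(∅, {u})|, |g(∅, {v})| ≤ 1` force `g(∅) = 0`.

If no edge leaves a vertex set `S`, a stable set is the union of a stable subset of `S` and
one of its complement, so `f(X) = f(X ∩ S, Sᶜ) · f(X \ S, S)`. If `S` contains `u` but not `v`,
this writes `f(∅)` as a product of two factors that are nonzero because `f(u), f(v) ≠ 0`.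
If `S` contains `u` and `v` but not `w`, it gives `f(v, w) = -f(u, w)`, so `g(u, w) - g(v, w)`
is even, hence `0`; but it adds up with `g(u, {w}) - g(v, {w})`, also of absolute value at
most `1`, to `g(u) - g(v) = 2`.
-/

open Finset
open scoped Classical

variable {V : Type*} [Fintype V]

/-- `fG G X Y` is the sum of `(-1)^|A|` over stable sets `A` of `G`
with `X ⊆ A` and `A ∩ Y = ∅`. -/
noncomputable def fG (G : SimpleGraph V) (X Y : Finset V) : ℤ :=
  ∑ A ∈ Finset.univ.filter (fun A : Finset V =>
      (∀ u ∈ A, ∀ v ∈ A, ¬ G.Adj u v) ∧ X ⊆ A ∧ Disjoint A Y),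
    (-1 : ℤ) ^ A.card

/-- `g` is a counter on `G` if `g = fG G` or `g = - fG G`. -/
def IsCounter (G : SimpleGraph V) (g : Finset V → Finset V → ℤ) : Prop :=
  (g = fun X Y => fG G X Y) ∨ (g = fun X Y => - fG G X Y)

/-- A counter is good if it satisfies the two boundedness conditions. -/
def IsGood (g : Finset V → Finset V → ℤ) : Prop :=
  ∀ X Y : Finset V, Disjoint X Y → (X ∪ Y).Nonempty →
    |g X Y| ≤ 1 ∧
    ∀ u v : V, u ∉ X ∪ Y → v ∉ X ∪ Y →
      |g (insert u X) Y - g (insert v X) Y| ≤ 1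

theorem fG_eq_mul_of_forall_not_adj {G : SimpleGraph V} {S : Finset V}
    (hS : ∀ a ∈ S, ∀ b ∉ S, ¬ G.Adj a b) (X : Finset V) :
    fG G X ∅ = fG G (X.filter (· ∈ S)) Sᶜ * fG G (X.filter (· ∉ S)) S := by
  unfold fG
  rw [sum_mul_sum, ← sum_product']
  refine sum_nbij' (fun A => (A.filter (· ∈ S), A.filter (· ∉ S))) (fun P => P.1 ∪ P.2)
    ?_ ?_ ?_ ?_ ?_ <;> simp only [mem_product, disjoint_empty_right, and_true,
      disjoint_compl_right_iff, mem_filter, mem_univ, true_and]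
  · rintro A ⟨hA, hXA⟩
    refine ⟨⟨fun a ha b hb => hA a ha.1 b hb.1, ?_, fun a ha => (mem_filter.1 ha).2⟩,
      fun a ha b hb => hA a ha.1 b hb.1, ?_, disjoint_left.2 fun a ha => (mem_filter.1 ha).2⟩
    all_goals exact filter_subset_filter _ hXA
  · rintro ⟨B, C⟩ ⟨⟨hB, hXB, hBS⟩, hC, hXC, hCS⟩
    refine ⟨?_, fun x hx => ?_⟩
    · have hCS' : ∀ c ∈ C, c ∉ S := fun c hc => disjoint_left.1 hCS hc
      simp only [mem_union]
      rintro a (ha | ha) b (hb | hb)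
      exacts [hB a ha b hb, hS a (hBS ha) b (hCS' b hb),
        fun h => hS b (hBS hb) a (hCS' a ha) h.symm, hC a ha b hb]
    · by_cases hxS : x ∈ S
      exacts [mem_union_left _ (hXB (mem_filter.2 ⟨hx, hxS⟩)),
        mem_union_right _ (hXC (mem_filter.2 ⟨hx, hxS⟩))]
  · intro A _
    exact filter_union_filter_not_eq _ A
  · rintro ⟨B, C⟩ ⟨⟨-, -, hBS⟩, -, -, hCS⟩
    have hCS' : ∀ x ∈ C, x ∉ S := fun x hx => disjoint_left.1 hCS hx
    ext x <;> simp only [mem_filter, mem_union] <;> grind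
  · intro A _
    rw [← pow_add, card_filter_add_card_filter_not]

theorem isGood_neg_iff {α : Type*} {g : Finset α → Finset α → ℤ} :
    IsGood (fun X Y => -g X Y) ↔ IsGood g := by
  simp only [IsGood, abs_neg, neg_sub_neg, abs_sub_comm]

theorem fG_eq_fG_insert_add_fG_insert (G : SimpleGraph V) (X Y : Finset V) (w : V) :
    fG G X Y = fG G X (insert w Y) + fG G (insert w X) Y := by
  unfold fG
  rw [← sum_filter_not_add_sum_filter _ (fun A => w ∈ A), filter_filter, filter_filter]
  congr 2 <;> ext A <;> simp only [mem_filter, disjoint_insert_right, insert_subset_iff] <;> tauto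

variable {G : SimpleGraph V} {u v w : V}

theorem fG_empty_empty_eq_zero (hg : IsGood (fG G)) (hu : fG G {u} ∅ = 1)
    (hv : fG G {v} ∅ = -1) : fG G ∅ ∅ = 0 := by
  have hdel (x : V) : fG G ∅ ∅ = fG G ∅ {x} + fG G {x} ∅ :=
    fG_eq_fG_insert_add_fG_insert G ∅ ∅ x
  obtain ⟨hu₁, -⟩ := abs_le.1 (hg ∅ {u} (disjoint_empty_left _) (by simp)).1
  obtain ⟨-, hv₁⟩ := abs_le.1 (hg ∅ {v} (disjoint_empty_left _) (by simp)).1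
  linarith [hdel u, hdel v]

theorem fG_empty_empty_ne_zero_of_forall_not_adj {S : Finset V}
    (hS : ∀ a ∈ S, ∀ b ∉ S, ¬ G.Adj a b) (huS : u ∈ S) (hvS : v ∉ S)
    (hu : fG G {u} ∅ ≠ 0) (hv : fG G {v} ∅ ≠ 0) : fG G ∅ ∅ ≠ 0 := by
  simp only [fG_eq_mul_of_forall_not_adj hS, filter_singleton, filter_empty, huS, hvS,
    if_true, if_false, not_true_eq_false, not_false_eq_true, ne_eq, mul_eq_zero, not_or]
    at hu hv ⊢
  exact ⟨hv.1, hu.2⟩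

theorem fG_mul_fG_insert_comm_of_forall_not_adj {S : Finset V}
    (hS : ∀ a ∈ S, ∀ b ∉ S, ¬ G.Adj a b) (huS : u ∈ S) (hvS : v ∈ S) (hwS : w ∉ S) :
    fG G {u} ∅ * fG G (insert v {w}) ∅ = fG G {v} ∅ * fG G (insert u {w}) ∅ := by
  simp only [fG_eq_mul_of_forall_not_adj hS, filter_insert, filter_singleton, huS, hvS, hwS,
    if_true, if_false, not_true_eq_false, not_false_eq_true, insert_empty_eq]
  ring

theorem fG_insert_ne_neg_fG_insert (hg : IsGood (fG G)) (hu : fG G {u} ∅ = 1)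
    (hv : fG G {v} ∅ = -1) (hwu : w ≠ u) (hwv : w ≠ v) :
    fG G (insert v {w}) ∅ ≠ -fG G (insert u {w}) ∅ := by
  intro h
  have hdel (x : V) : fG G {x} ∅ = fG G {x} {w} + fG G (insert x {w}) ∅ := by
    rw [pair_comm]
    exact fG_eq_fG_insert_add_fG_insert G {x} ∅ w
  have hdu := hdel u
  have hdv := hdel v
  have hYw := (hg ∅ {w} (disjoint_empty_left _) (by simp)).2 u v
    (by simp [hwu.symm]) (by simp [hwv.symm])
  have hXw := (hg {w} ∅ (disjoint_empty_right _) (by simp)).2 u v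
    (by simp [hwu.symm]) (by simp [hwv.symm])
  rw [insert_empty_eq, insert_empty_eq, abs_le] at hYw
  rw [abs_le] at hXw
  omega

theorem exists_adj_of_mem_of_notMem (hg : IsGood (fG G)) (hu : fG G {u} ∅ = 1)
    (hv : fG G {v} ∅ = -1) {S : Finset V} {y : V} (huS : u ∈ S) (hyS : y ∉ S) :
    ∃ a ∈ S, ∃ b ∉ S, G.Adj a b := by
  by_contra! hS
  by_cases hvS : v ∈ S
  · refine fG_insert_ne_neg_fG_insert hg hu hv (ne_of_mem_of_not_mem huS hyS).symm
      (ne_of_mem_of_not_mem hvS hyS).symm ?_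
    have := fG_mul_fG_insert_comm_of_forall_not_adj hS huS hvS hyS
    rw [hu, hv] at this
    linarith
  · exact fG_empty_empty_ne_zero_of_forall_not_adj hS huS hvS (by simp [hu]) (by simp [hv])
      (fG_empty_empty_eq_zero hg hu hv)

theorem connected_of_isGood_fG (hg : IsGood (fG G)) (hu : fG G {u} ∅ = 1)
    (hv : fG G {v} ∅ = -1) : G.Connected := by
  refine (SimpleGraph.connected_iff G).2 ⟨fun x y => by_contra fun hxy => ?_, ⟨u⟩⟩
  set S := univ.filter (G.Reachable x)
  have hxS : x ∈ S := mem_filter.2 ⟨mem_univ x, .refl x⟩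
  have hyS : y ∉ S := fun h => hxy (mem_filter.1 h).2
  have hS : ∀ a ∈ S, ∀ b ∉ S, ¬ G.Adj a b := fun a ha b hb hab =>
    hb (mem_filter.2 ⟨mem_univ b, (mem_filter.1 ha).2.trans hab.reachable⟩)
  by_cases huS : u ∈ S
  · obtain ⟨a, ha, b, hb, hab⟩ := exists_adj_of_mem_of_notMem hg hu hv huS hyS
    exact hS a ha b hb hab
  · obtain ⟨a, ha, b, hb, hab⟩ :=
      exists_adj_of_mem_of_notMem hg hu hv (mem_compl.2 huS) (notMem_compl.2 hxS)
    exact hS b (notMem_compl.1 hb) a (mem_compl.1 ha) hab.symm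

theorem mixed_values_connected (G : SimpleGraph V) (g : Finset V → Finset V → ℤ)
    (hc : IsCounter G g) (hg : IsGood g)
    (u v : V) (hu : g {u} ∅ = 1) (hv : g {v} ∅ = -1) :
    g ∅ ∅ = 0 ∧ G.Connected := by
  rcases hc with rfl | rfl
  · exact ⟨fG_empty_empty_eq_zero hg hu hv, connected_of_isGood_fG hg hu hv⟩
  · have hg' : IsGood (fG G) := isGood_neg_iff.1 hg
    have hv' : fG G {v} ∅ = 1 := neg_inj.1 hv
    have hu' : fG G {u} ∅ = -1 := neg_eq_iff_eq_neg.1 hu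
    exact ⟨neg_eq_zero.2 (fG_empty_empty_eq_zero hg' hv' hu'),
      connected_of_isGood_fG hg' hv' hu'⟩
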